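/- Let f : ℝⁿ → ℝ be C², let τ, r ∈ (0,1), ᾱ > 0 and x₀ ∈ ℝⁿ, and let (x_t)_{t≥0} and (α_t)_{t≥0} be the sequences generated by stabilized Armijo backtracking gradient descent. If the sequence (x_t) converges to a point of ℝⁿ, then the step sizes eventually stabilize: there exist T ≥ 0 and α∞ > 0 such that α_t = α∞ for all t ≥ T (so that x_{t+1} = x_t − α∞ ∇f(x_t) for all t ≥ T). -/

import Mathlib

open MeasureTheory Filter Topology

noncomputable section

/-- The Armijo sufficient decrease condition for `f` at point `x` with step size `α` and
tolerance `r`. -/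
def ArmijoCond {n : ℕ} (f : EuclideanSpace ℝ (Fin n) → ℝ) (r : ℝ)
    (x : EuclideanSpace ℝ (Fin n)) (α : ℝ) : Prop :=
  r * α * ‖gradient f x‖ ^ 2 ≤ f x - f (x - α • gradient f x)

/-- The sequences `(x_t)` and `(α_t)` are generated by stabilized Armijo backtracking
gradient descent with parameters `τ, r`, initial step size `abar` and initial point `x 0`.
Here `a t` denotes `α_{t−1}`, so `a 0 = ᾱ = abar`, and at iteration `t` the accepted step
size is `a (t+1) = τ^k * a t` with `k` the smallest nonnegative integer such that the
Armijo condition holds. -/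
def StabilizedArmijo {n : ℕ} (f : EuclideanSpace ℝ (Fin n) → ℝ) (τ r abar : ℝ)
    (x : ℕ → EuclideanSpace ℝ (Fin n)) (a : ℕ → ℝ) : Prop :=
  a 0 = abar ∧
  ∀ t : ℕ, ∃ k : ℕ,
    a (t + 1) = τ ^ k * a t ∧
    ArmijoCond f r (x t) (τ ^ k * a t) ∧
    (∀ j < k, ¬ ArmijoCond f r (x t) (τ ^ j * a t)) ∧
    x (t + 1) = x t - a (t + 1) • gradient f (x t)

open InnerProductSpace in
set_option maxHeartbeats 1000000 in
private theorem armijo_aux {n : ℕ} (f : EuclideanSpace ℝ (Fin n) → ℝ) (hf : ContDiff ℝ 2 f)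
    (r : ℝ) (hr : r ∈ Set.Ioo (0:ℝ) 1) (p : EuclideanSpace ℝ (Fin n)) :
    ∃ ε > 0, ∃ δ > 0, ∀ y ∈ Metric.closedBall p δ, ∀ α, 0 ≤ α → α ≤ ε →
      ArmijoCond f r y α := by
  have hdiff : Differentiable ℝ f := hf.differentiable (by norm_num)
  have hdf : ContDiff ℝ 1 (fderiv ℝ f) := hf.fderiv_right (by norm_num)
  obtain ⟨K, t, ht, hK⟩ := hdf.contDiffAt.exists_lipschitzOnWith (x := p)
  set M : ℝ := ‖gradient f p‖ + 1 with hM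
  have hM1 : (1:ℝ) ≤ M := by have := norm_nonneg (gradient f p); linarith
  have hM0 : (0:ℝ) < M := by linarith
  obtain ⟨δ₁, hδ₁, hball⟩ := Metric.mem_nhds_iff.1 ht
  have hgradcont : Continuous (fun y => gradient f y) :=
    ((toDual ℝ (EuclideanSpace ℝ (Fin n))).symm.continuous).comp hdf.continuous
  have hnear : ∀ᶠ y in 𝓝 p, ‖gradient f y‖ < M := by
    have : Tendsto (fun y => ‖gradient f y‖) (𝓝 p) (𝓝 ‖gradient f p‖) :=
      (hgradcont.norm).tendsto p
    exact this.eventually_lt_const (by simp [hM])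
  obtain ⟨δ₂, hδ₂, hM2⟩ := Metric.eventually_nhds_iff_ball.1 hnear
  set δ0 : ℝ := min δ₁ δ₂ with hδ0
  have hδ0pos : 0 < δ0 := lt_min hδ₁ hδ₂
  have hK0 : (0:ℝ) ≤ (K:ℝ) := K.coe_nonneg
  have hr1 : (0:ℝ) < 1 - r := by linarith [hr.2]
  refine ⟨min (δ0/(4*M)) ((1-r)/((K:ℝ)+1)), lt_min (by positivity) (by positivity),
    δ0/4, by positivity, ?_⟩
  intro y hy α hα0 hαε
  have hα1 : α ≤ δ0/(4*M) := le_trans hαε (min_le_left _ _)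
  have hα2 : α ≤ (1-r)/((K:ℝ)+1) := le_trans hαε (min_le_right _ _)
  have hαM : α * M ≤ δ0/4 := by
    calc α * M ≤ (δ0/(4*M)) * M := by nlinarith
    _ = δ0/4 := by field_simp
  set g := gradient f y with hg
  have hy' : dist y p ≤ δ0/4 := Metric.mem_closedBall.1 hy
  have hgM : ‖g‖ < M := hM2 y (Metric.mem_ball.2 (lt_of_le_of_lt hy'
      (lt_of_lt_of_le (by linarith) (min_le_right δ₁ δ₂))))
  have hαg : α * ‖g‖ ≤ δ0/4 := by nlinarith [norm_nonneg g]
  -- the segment from y to y - α•g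
  set y' := y - α • g with hy'def
  have hdistyy' : dist y' y ≤ δ0/4 := by
    rw [dist_eq_norm]
    simpa [hy'def, norm_smul, abs_of_nonneg hα0] using hαg
  have hseg : segment ℝ y y' ⊆ Metric.closedBall y (α * ‖g‖) := by
    apply (convex_closedBall y (α * ‖g‖)).segment_subset
    · exact Metric.mem_closedBall_self (by positivity)
    · rw [Metric.mem_closedBall, dist_eq_norm]
      simp [hy'def, norm_smul, abs_of_nonneg hα0]
  have hsegt : segment ℝ y y' ⊆ t := by
    intro z hz
    apply hball
    rw [Metric.mem_ball]
    calc dist z p ≤ dist z y + dist y p := dist_triangle _ _ _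
      _ ≤ α * ‖g‖ + δ0/4 := add_le_add (hseg hz) hy'
      _ ≤ δ0/4 + δ0/4 := by linarith
      _ < δ₁ := lt_of_lt_of_le (by linarith) (min_le_left δ₁ δ₂)
  -- the auxiliary function h z = f z - ⟪g, z⟫
  have hfd : fderiv ℝ f y = toDual ℝ _ g :=
    ((hdiff.differentiableAt).hasGradientAt).hasFDerivAt.fderiv
  set h : EuclideanSpace ℝ (Fin n) → ℝ := fun z => f z - (toDual ℝ _ g) z with hh
  have hhd : ∀ z, DifferentiableAt ℝ h z := fun z =>
    (hdiff.differentiableAt).sub ((toDual ℝ _ g).differentiableAt)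
  have hhfd : ∀ z, fderiv ℝ h z = fderiv ℝ f z - toDual ℝ _ g := by
    intro z
    rw [hh]
    rw [fderiv_fun_sub (hdiff.differentiableAt) ((toDual ℝ _ g).differentiableAt)]
    simp [(toDual ℝ _ g).fderiv]
  have hbound : ∀ z ∈ segment ℝ y y', ‖fderiv ℝ h z‖ ≤ (K:ℝ) * (α * ‖g‖) := by
    intro z hz
    rw [hhfd, ← hfd, ← dist_eq_norm]
    calc dist (fderiv ℝ f z) (fderiv ℝ f y) ≤ (K:ℝ) * dist z y :=
          hK.dist_le_mul z (hsegt hz) y (hsegt (left_mem_segment ℝ y y'))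
      _ ≤ (K:ℝ) * (α * ‖g‖) := by
          have := Metric.mem_closedBall.1 (hseg hz)
          nlinarith
  have hmvt : ‖h y' - h y‖ ≤ ((K:ℝ) * (α * ‖g‖)) * ‖y' - y‖ :=
    (convex_segment y y').norm_image_sub_le_of_norm_fderiv_le
      (fun z _ => hhd z) hbound (left_mem_segment ℝ y y') (right_mem_segment ℝ y y')
  have hnyy : ‖y' - y‖ = α * ‖g‖ := by
    simp [hy'def, norm_smul, abs_of_nonneg hα0]
  have hinner : (toDual ℝ _ g) y - (toDual ℝ _ g) y' = α * ‖g‖^2 := by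
    simp only [toDual_apply_apply, hy'def, inner_sub_right, inner_smul_right]
    rw [real_inner_self_eq_norm_sq]
    ring
  have hkey : f y' - f y + α * ‖g‖^2 ≤ (K:ℝ) * (α*‖g‖) * (α*‖g‖) := by
    have h1 : h y' - h y ≤ ((K:ℝ) * (α * ‖g‖)) * (α * ‖g‖) := by
      calc h y' - h y ≤ ‖h y' - h y‖ := le_abs_self _
        _ ≤ _ := hmvt.trans (le_of_eq (by rw [hnyy]))
    have h2 : h y' - h y = f y' - f y + α * ‖g‖^2 := by
      simp only [hh]; rw [← hinner]; ring
    rw [h2] at h1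
    exact h1
  show r * α * ‖g‖ ^ 2 ≤ f y - f y'
  have hKα : (K:ℝ) * α ≤ 1 - r := by
    have h3 := (le_div_iff₀ (by positivity : (0:ℝ) < (K:ℝ)+1)).1 hα2
    nlinarith
  have h4 : 0 ≤ (1 - r - (K:ℝ)*α) * (α * ‖g‖^2) :=
    mul_nonneg (by linarith) (mul_nonneg hα0 (sq_nonneg _))
  nlinarith [h4, hkey]

/-- If the iterates of stabilized Armijo backtracking gradient descent converge, then the
step sizes eventually stabilize: there are `T` and `αinf > 0` with `α_t = αinf` for all
`t ≥ T`, so that the update becomes a constant-step gradient descent step. -/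
theorem stabilized_armijo_stepsize_stabilizes {n : ℕ}
    (f : EuclideanSpace ℝ (Fin n) → ℝ) (hf : ContDiff ℝ 2 f)
    (τ r abar : ℝ) (hτ : τ ∈ Set.Ioo (0 : ℝ) 1) (hr : r ∈ Set.Ioo (0 : ℝ) 1)
    (habar : 0 < abar)
    (x : ℕ → EuclideanSpace ℝ (Fin n)) (a : ℕ → ℝ)
    (harm : StabilizedArmijo f τ r abar x a)
    (p : EuclideanSpace ℝ (Fin n)) (hconv : Tendsto x atTop (𝓝 p)) :
    ∃ T : ℕ, ∃ αinf : ℝ, 0 < αinf ∧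
      ∀ t ≥ T, a (t + 1) = αinf ∧
        x (t + 1) = x t - αinf • gradient f (x t) := by
  obtain ⟨ha0, hspec⟩ := harm
  have hpos : ∀ t, 0 < a t := by
    intro t
    induction t with
    | zero => rw [ha0]; exact habar
    | succ s ih =>
      obtain ⟨k, hk1, -, -, -⟩ := hspec s
      rw [hk1]; exact mul_pos (pow_pos hτ.1 k) ih
  have hmono : ∀ t, a (t + 1) ≤ a t := by
    intro t
    obtain ⟨k, hk1, -, -, -⟩ := hspec t
    rw [hk1]
    calc τ ^ k * a t ≤ 1 * a t :=
          mul_le_mul_of_nonneg_right (pow_le_one₀ hτ.1.le hτ.2.le) (hpos t).le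
      _ = a t := one_mul _
  have hanti : Antitone a := antitone_nat_of_succ_le hmono
  have hupd : ∀ t, x (t + 1) = x t - a (t + 1) • gradient f (x t) := by
    intro t
    obtain ⟨k, -, -, -, hk4⟩ := hspec t
    exact hk4
  have hstep : ∀ t, ArmijoCond f r (x t) (a t) → a (t + 1) = a t := by
    intro t hArm
    obtain ⟨k, hk1, -, hk3, -⟩ := hspec t
    rcases Nat.eq_zero_or_pos k with hk | hk
    · rw [hk1, hk, pow_zero, one_mul]
    · exact absurd (by simpa using hArm) (by simpa using hk3 0 hk)
  -- from eventual constancy we conclude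
  have hconc : ∀ T : ℕ, (∀ t ≥ T, a (t + 1) = a t) →
      ∃ T' : ℕ, ∃ αinf : ℝ, 0 < αinf ∧
        ∀ t ≥ T', a (t + 1) = αinf ∧
          x (t + 1) = x t - αinf • gradient f (x t) := by
    intro T hT
    refine ⟨T, a T, hpos T, ?_⟩
    have hconst : ∀ t ≥ T, a t = a T := by
      intro t ht
      induction t with
      | zero => rw [Nat.le_zero.1 ht]
      | succ s ih =>
        rcases Nat.lt_or_ge T (s+1) with h | h
        · have hsT : T ≤ s := Nat.lt_succ_iff.1 h
          rw [hT s hsT, ih hsT]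
        · rw [Nat.le_antisymm ht h]
    intro t ht
    have h1 : a (t + 1) = a T := by
      rw [hT t ht]; exact hconst t ht
    exact ⟨h1, by rw [← h1]; exact hupd t⟩
  set L := ⨅ t, a t with hL
  have hbdd : BddBelow (Set.range a) := ⟨0, by rintro y ⟨t, rfl⟩; exact (hpos t).le⟩
  have htend : Tendsto a atTop (𝓝 L) := tendsto_atTop_ciInf hanti hbdd
  have hL0 : 0 ≤ L := le_ciInf fun t => (hpos t).le
  rcases hL0.lt_or_eq with hLpos | hLzero
  · -- L > 0 : eventually no backtracking
    have hLτ : L < L / τ := by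
      rw [lt_div_iff₀ hτ.1]; nlinarith [hτ.2, hLpos]
    obtain ⟨T, hT⟩ := (htend.eventually_lt_const hLτ).exists_forall_of_atTop
    apply hconc T
    intro t ht
    obtain ⟨k, hk1, -, -, -⟩ := hspec t
    rcases Nat.eq_zero_or_pos k with hk | hk
    · rw [hk1, hk, pow_zero, one_mul]
    · exfalso
      have h2 : a (t + 1) ≤ τ * a t := by
        rw [hk1]
        have : τ ^ k ≤ τ ^ 1 := pow_le_pow_of_le_one hτ.1.le hτ.2.le hk
        calc τ ^ k * a t ≤ τ ^ 1 * a t :=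
              mul_le_mul_of_nonneg_right this (hpos t).le
          _ = τ * a t := by rw [pow_one]
      have h3 : a t < L / τ := hT t ht
      have h4 : τ * a t < L := by
        rw [lt_div_iff₀ hτ.1] at h3; nlinarith
      have h5 : L ≤ a (t + 1) := ciInf_le hbdd (t + 1)
      linarith
  · -- L = 0 : the step sizes enter the region where Armijo always holds
    obtain ⟨ε, hε, δ, hδ, haux⟩ := armijo_aux f hf r hr p
    have hx : ∀ᶠ t in atTop, x t ∈ Metric.closedBall p δ :=
      hconv.eventually (Metric.closedBall_mem_nhds p hδ)
    obtain ⟨T₁, hT₁⟩ := hx.exists_forall_of_atTop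
    have ha : ∀ᶠ t in atTop, a t < ε := by
      rw [← hLzero] at htend
      exact (htend.eventually_lt_const hε)
    obtain ⟨T₂, hT₂⟩ := ha.exists_forall_of_atTop
    apply hconc (max T₁ T₂)
    intro t ht
    exact hstep t (haux (x t) (hT₁ t (le_trans (le_max_left _ _) ht)) (a t)
      (hpos t).le (hT₂ t (le_trans (le_max_right _ _) ht)).le)
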